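/- Let 0<r<1 and suppose 0 ≤ x ≤ z ≤ 2^{-r}. Then for every real y with y ≥ z^{1/r}, one has (z^{1/r}+y)^r - (x^{1/r}+y)^r ≤ 2^r (z-x). In particular this inequality holds for all y ≥ 1/2. -/

import Mathlib

/-!
Since `t ↦ t ^ r` is concave on `[0, ∞)`, its increments over an interval of fixed length shrink
as the interval moves to the right. With `a = x ^ (1/r)` and `b = z ^ (1/r)` this gives, for every
`y ≥ 0`, `(b + y) ^ r - (a + y) ^ r ≤ b ^ r - a ^ r = z - x ≤ 2 ^ r (z - x)`.
-/

open Set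

lemma ConcaveOn.map_add_sub_map_add_le {𝕜 : Type*} [Field 𝕜] [LinearOrder 𝕜]
    [IsStrictOrderedRing 𝕜] {s : Set 𝕜} {f : 𝕜 → 𝕜} (hf : ConcaveOn 𝕜 s f) {a b d : 𝕜}
    (ha : a ∈ s) (hbd : b + d ∈ s) (hab : a ≤ b) (hd : 0 ≤ d) :
    f (b + d) - f (a + d) ≤ f b - f a := by
  rcases hab.eq_or_lt with rfl | hab
  · simp
  have hL : 0 < b + d - a := by linarith
  -- `a + d` and `b` are the two convex combinations of `a` and `b + d` with swapped weights.
  have hsum₁ : (b - a) / (b + d - a) + d / (b + d - a) = 1 := by field_simp; ring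
  have hsum₂ : d / (b + d - a) + (b - a) / (b + d - a) = 1 := by rw [add_comm, hsum₁]
  have h₁ := hf.2 ha hbd (by positivity) (by positivity) hsum₁
  have h₂ := hf.2 ha hbd (by positivity) (by positivity) hsum₂
  have hmid₁ : ((b - a) / (b + d - a)) • a + (d / (b + d - a)) • (b + d) = a + d := by
    simp only [smul_eq_mul]; field_simp; ring
  have hmid₂ : (d / (b + d - a)) • a + ((b - a) / (b + d - a)) • (b + d) = b := by
    simp only [smul_eq_mul]; field_simp; ring
  rw [hmid₁] at h₁
  rw [hmid₂] at h₂
  have hfsum : f a + f (b + d) ≤ f (a + d) + f b :=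
    calc f a + f (b + d)
        = ((b - a) / (b + d - a) + d / (b + d - a)) * (f a + f (b + d)) := by rw [hsum₁, one_mul]
      _ = ((b - a) / (b + d - a)) • f a + (d / (b + d - a)) • f (b + d)
          + ((d / (b + d - a)) • f a + ((b - a) / (b + d - a)) • f (b + d)) := by
            simp only [smul_eq_mul]; ring
      _ ≤ f (a + d) + f b := add_le_add h₁ h₂
  linarith

lemma Real.add_rpow_sub_add_rpow_le {r x z y : ℝ} (hr0 : 0 < r) (hr1 : r ≤ 1)
    (hx : 0 ≤ x) (hxz : x ≤ z) (hy : 0 ≤ y) :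
    (z ^ (1 / r) + y) ^ r - (x ^ (1 / r) + y) ^ r ≤ z - x := by
  have hpow : ∀ {t : ℝ}, 0 ≤ t → (t ^ (1 / r)) ^ r = t := fun ht => by
    rw [one_div, Real.rpow_inv_rpow ht hr0.ne']
  have hz := hx.trans hxz
  have := (Real.concaveOn_rpow hr0.le hr1).map_add_sub_map_add_le
    (mem_Ici.2 (Real.rpow_nonneg hx (1 / r)))
    (mem_Ici.2 (add_nonneg (Real.rpow_nonneg hz (1 / r)) hy))
    (Real.rpow_le_rpow hx hxz (by positivity : (0 : ℝ) ≤ 1 / r)) hy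
  rwa [hpow hx, hpow hz] at this

theorem stmt3 (r x z : ℝ) (hr0 : 0 < r) (hr1 : r < 1)
    (hx : 0 ≤ x) (hxz : x ≤ z) :
    (∀ y : ℝ, z ^ (1 / r) ≤ y →
      (z ^ (1 / r) + y) ^ r - (x ^ (1 / r) + y) ^ r ≤ 2 ^ r * (z - x)) ∧
    (∀ y : ℝ, 1 / 2 ≤ y →
      (z ^ (1 / r) + y) ^ r - (x ^ (1 / r) + y) ^ r ≤ 2 ^ r * (z - x)) := by
  have key : ∀ y : ℝ, 0 ≤ y →
      (z ^ (1 / r) + y) ^ r - (x ^ (1 / r) + y) ^ r ≤ 2 ^ r * (z - x) := fun y hy =>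
    calc (z ^ (1 / r) + y) ^ r - (x ^ (1 / r) + y) ^ r ≤ z - x :=
          Real.add_rpow_sub_add_rpow_le hr0 hr1.le hx hxz hy
      _ ≤ 2 ^ r * (z - x) :=
          le_mul_of_one_le_left (sub_nonneg.2 hxz) (Real.one_le_rpow one_le_two hr0.le)
  exact ⟨fun y hy => key y ((Real.rpow_nonneg (hx.trans hxz) _).trans hy),
    fun y hy => key y (by linarith)⟩
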